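/- Fix t ∈ ℚ. For every integer m ≥ 1 and every natural number n ≥ m+1, the backward-shifted Hankel determinant of Narayana polynomials of type B satisfies det(B_{i+j−m}(t))_{i,j=0}^{n−1} = (−1)^{binom(m+1,2)} · (2t)^{n−m−1} · det(C_{i+j+m+1}(t))_{i,j=0}^{n−m−2}; moreover det(B_{i+j−m}(t))_{i,j=0}^{n−1} = 0 for all n with 1 ≤ n ≤ m. -/

import Mathlib

/-!
Put `Q = (X + 1) (X + t)` and `g_r(n) = [X^(n+r)] Q^n = ∑_k C(n,k) C(n,k+r) t^k`, so that
`B_n = g_0(n)`. Since `Q = X (X + (1 + t) + t X⁻¹)`, `g_r(n)` counts walks of length `n` from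
height `r` to `0` whose down, level and up steps have weights `1`, `1 + t`, `t`. Decomposing at
the first visit to `0` gives `g_r(n) = ∑_j f_r(n - j) g_0(j)` with first-passage weights
`f_r(s) = (r / s) g_r(s)` (cycle lemma), and `f_1(s) = C_s`. Together with
`B_(n+1) = (1 + t) B_n + 2t g_1(n)` this shows that `∑ B_n x^n` has reciprocal
`1 - (1 + t) x - 2t ∑_s C_(s+1) x^(s+2)`.

Multiplying the Hankel matrix `(B_(i+j-m))` on the right by the unitriangular Toeplitz matrix of
this reciprocal makes it block lower triangular: its top-left `(m+1) × (m+1)` block is the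
anti-diagonal identity, and its bottom-right block is the transposed Toeplitz matrix of the `B_n`
times `2t (C_(i+j+m+1))`.
-/

open Finset

/-- Narayana polynomials of type B, `B_n(t) = ∑_{k=0}^n C(n,k)^2 t^k`,
extended to `ℤ` by `0` for negative indices. -/
def narayanaB (t : ℚ) (n : ℤ) : ℚ :=
  if 0 ≤ n then ∑ k ∈ Finset.range (n.toNat + 1), (n.toNat.choose k : ℚ) ^ 2 * t ^ k else 0

/-- Narayana polynomials `C_n(t)`, extended to `ℤ` by `0` for negative indices:
`C_0(t) = 1` and `C_n(t) = ∑_{k=0}^{n-1} (1/(k+1)) C(n-1,k) C(n,k) t^k` for `n ≥ 1`. -/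
def narayana (t : ℚ) (n : ℤ) : ℚ :=
  if n < 0 then 0
  else if n = 0 then 1
  else ∑ k ∈ Finset.range n.toNat,
    (1 / ((k : ℚ) + 1)) * ((n.toNat - 1).choose k : ℚ) * (n.toNat.choose k : ℚ) * t ^ k

open Polynomial

section OffsetCoeff

lemma coeff_quadratic_mul {R : Type*} [CommRing R] {t : R} (p : R[X]) (n : ℕ) :
    ((X + 1) * (X + C t) * p).coeff (n + 2) =
      p.coeff n + (1 + t) * p.coeff (n + 1) + t * p.coeff (n + 2) := by
  have : (X + 1) * (X + C t) * p = p * X ^ 2 + C (1 + t) * (p * X) + C t * p := by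
    simp only [map_add, map_one]; ring
  rw [this, coeff_add, coeff_add, coeff_mul_X_pow, coeff_C_mul, coeff_C_mul, coeff_mul_X]

variable {R : Type*} [CommRing R] (t : R)

noncomputable def offsetCoeff (r n : ℕ) : R := (((X + 1) * (X + C t)) ^ n).coeff (n + r)

lemma offsetCoeff_eq_sum (r n : ℕ) :
    offsetCoeff t r n =
      ∑ k ∈ range (n + 1), (n.choose k : R) * (n.choose (k + r) : R) * t ^ k := by
  rw [offsetCoeff, mul_pow, mul_comm, coeff_mul, Nat.sum_antidiagonal_eq_sum_range_succ_mk,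
    Nat.succ_eq_add_one, show n + r + 1 = n + 1 + r by ring, sum_range_add, ← sum_range_reflect]
  dsimp only
  have htail : ∀ x ∈ range r,
      ((X + C t) ^ n).coeff (n + 1 + x) * ((X + 1) ^ n).coeff (n + r - (n + 1 + x)) = 0 :=
    fun x _ => by rw [coeff_X_add_C_pow, Nat.choose_eq_zero_of_lt (by omega)]; simp
  rw [sum_eq_zero htail, add_zero]
  refine sum_congr rfl fun k hk => ?_
  have hk : k ≤ n := Nat.lt_succ_iff.mp (mem_range.mp hk)
  rw [coeff_X_add_C_pow, coeff_X_add_one_pow, Nat.add_sub_cancel, Nat.sub_sub_self hk,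
    Nat.choose_symm hk, show n + r - (n - k) = k + r by omega]
  ring

lemma offsetCoeff_zero_right (r : ℕ) : offsetCoeff t r 0 = if r = 0 then 1 else 0 := by
  simp [offsetCoeff, coeff_one]

lemma offsetCoeff_succ_one (r : ℕ) : offsetCoeff t (r + 1) 1 = if r = 0 then 1 else 0 := by
  have h := coeff_quadratic_mul (t := t) 1 r
  rw [mul_one] at h
  rw [offsetCoeff, pow_one, add_comm 1, add_assoc, one_add_one_eq_two, h]
  rcases r with _ | r <;> simp [coeff_one]

lemma offsetCoeff_succ_succ (r n : ℕ) :
    offsetCoeff t (r + 1) (n + 1) =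
      offsetCoeff t r n + (1 + t) * offsetCoeff t (r + 1) n + t * offsetCoeff t (r + 2) n := by
  rw [offsetCoeff, pow_succ', show n + 1 + (r + 1) = n + r + 2 by ring, coeff_quadratic_mul]
  rfl

lemma offsetCoeff_contiguous (r s : ℕ) :
    ((s : R) + 1 - r) * offsetCoeff t r (s + 1) =
      (r + 1) * (1 + t) * offsetCoeff t (r + 1) (s + 1) +
        t * (s + r + 3) * offsetCoeff t (r + 2) (s + 1) := by
  have hQ : derivative ((X + 1) * (X + C t)) = X * C 2 + C (1 + t) := by
    simp only [derivative_mul, derivative_X, derivative_one, derivative_C, map_add, map_one,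
      map_ofNat]
    ring
  have hode : (X + 1) * (X + C t) * derivative (((X + 1) * (X + C t)) ^ (s + 1)) =
      C ((s : R) + 1) * (C 2 * (((X + 1) * (X + C t)) ^ (s + 1) * X) +
        C (1 + t) * ((X + 1) * (X + C t)) ^ (s + 1)) := by
    rw [derivative_pow_succ, hQ]; ring
  have hc := congrArg (coeff · (s + r + 2)) hode
  rw [coeff_quadratic_mul, coeff_derivative, coeff_derivative, coeff_derivative, coeff_C_mul,
    coeff_add, coeff_C_mul, coeff_C_mul, coeff_mul_X] at hc
  simp only [offsetCoeff]
  rw [show s + 1 + r = s + r + 1 by ring, show s + 1 + (r + 1) = s + r + 2 by ring,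
    show s + 1 + (r + 2) = s + r + 3 by ring]
  push_cast at hc
  linear_combination -hc

end OffsetCoeff

section FirstPassage

variable {K : Type*} [Field K] (t : K)

noncomputable def firstPassage (r s : ℕ) : K :=
  if s = 0 then if r = 0 then 1 else 0 else r / s * offsetCoeff t r s

lemma firstPassage_zero_right (r : ℕ) : firstPassage t r 0 = if r = 0 then 1 else 0 := by
  simp [firstPassage]

lemma firstPassage_zero_succ (s : ℕ) : firstPassage t 0 (s + 1) = 0 := by
  simp [firstPassage]

variable [CharZero K]

lemma offsetCoeff_zero_succ (n : ℕ) :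
    offsetCoeff t 0 (n + 1) = (1 + t) * offsetCoeff t 0 n + 2 * t * offsetCoeff t 1 n := by
  rcases n with _ | s
  · simp [offsetCoeff, coeff_one, mul_add, add_mul, coeff_X, coeff_C, ← pow_two, coeff_X_pow]
  · have h₀ := offsetCoeff_contiguous t 0 (s + 1)
    have h₀' := offsetCoeff_contiguous t 0 s
    have h₁ := offsetCoeff_contiguous t 1 s
    have e₁ := offsetCoeff_succ_succ t 0 (s + 1)
    have e₂ := offsetCoeff_succ_succ t 1 (s + 1)
    push_cast at *
    have hs : (s : K) + 2 ≠ 0 := by exact_mod_cast Nat.succ_ne_zero (s + 1)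
    apply mul_left_cancel₀ hs
    -- eliminate `g_1(s+2)`, `g_2(s+2)`, `g_2(s+1)` and `g_3(s+1)`
    linear_combination h₀ + (1 + t) * e₁ + t * (s + 4) * e₂ - t * h₁ - (1 + t) * h₀'

lemma firstPassage_succ_succ (r s : ℕ) :
    firstPassage t (r + 1) (s + 1) =
      (1 + t) * firstPassage t (r + 1) s + firstPassage t r s + t * firstPassage t (r + 2) s := by
  rcases s with _ | s
  · rcases r with _ | r <;> simp [firstPassage, offsetCoeff_succ_one]
  · have hrec := offsetCoeff_succ_succ t r (s + 1)
    have hcont := offsetCoeff_contiguous t r s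
    have h₁ : (s : K) + 1 ≠ 0 := by exact_mod_cast Nat.succ_ne_zero s
    have h₂ : (s : K) + 1 + 1 ≠ 0 := by exact_mod_cast Nat.succ_ne_zero (s + 1)
    simp only [firstPassage, Nat.succ_ne_zero, if_false]
    push_cast
    field_simp
    linear_combination (s + 1) * (r + 1) * hrec + hcont

lemma offsetCoeff_eq_sum_firstPassage (m r : ℕ) :
    offsetCoeff t r m = ∑ j ∈ range (m + 1), firstPassage t r (m - j) * offsetCoeff t 0 j := by
  induction m generalizing r with
  | zero => simp [firstPassage_zero_right, offsetCoeff_zero_right]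
  | succ m ih =>
    rw [sum_range_succ, Nat.sub_self, firstPassage_zero_right]
    have hsub : ∀ j ∈ range (m + 1), m + 1 - j = m - j + 1 := fun j hj => by
      have := mem_range.mp hj; omega
    rcases r with _ | r
    · rw [sum_eq_zero fun j hj => by rw [hsub j hj, firstPassage_zero_succ, zero_mul]]
      simp
    · have hsplit :
          ∑ j ∈ range (m + 1), firstPassage t (r + 1) (m + 1 - j) * offsetCoeff t 0 j =
            (1 + t) * offsetCoeff t (r + 1) m + offsetCoeff t r m +
              t * offsetCoeff t (r + 2) m := by
        simp only [ih, mul_sum, ← sum_add_distrib]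
        refine sum_congr rfl fun j hj => ?_
        rw [hsub j hj, firstPassage_succ_succ]
        ring
      rw [hsplit, offsetCoeff_succ_succ, if_neg r.succ_ne_zero, zero_mul, add_zero]
      ring

noncomputable def recipCoeff : ℕ → K
  | 0 => 1
  | 1 => -(1 + t)
  | s + 2 => -(2 * t * firstPassage t 1 (s + 1))

lemma sum_offsetCoeff_mul_recipCoeff (N : ℕ) :
    ∑ u ∈ range (N + 1), offsetCoeff t 0 u * recipCoeff t (N - u) = if N = 0 then 1 else 0 := by
  rcases N with _ | _ | M
  · simp [recipCoeff, offsetCoeff_zero_right]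
  · simp [sum_range_succ, recipCoeff, offsetCoeff_zero_right, offsetCoeff_zero_succ]
  · have hconv : ∑ u ∈ range (M + 1), offsetCoeff t 0 u * recipCoeff t (M + 2 - u) =
        -(2 * t * offsetCoeff t 1 (M + 1)) := by
      rw [offsetCoeff_eq_sum_firstPassage, sum_range_succ _ (M + 1), Nat.sub_self,
        firstPassage_zero_right, if_neg one_ne_zero, zero_mul, add_zero, mul_sum,
        ← sum_neg_distrib]
      refine sum_congr rfl fun u hu => ?_
      have hu : u ≤ M := Nat.lt_succ_iff.mp (mem_range.mp hu)
      rw [show M + 2 - u = M - u + 2 by omega, show M + 1 - u = M - u + 1 by omega, recipCoeff]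
      ring
    rw [if_neg (by omega), sum_range_succ, sum_range_succ, hconv, Nat.sub_self,
      show M + 2 - (M + 1) = 1 by omega, offsetCoeff_zero_succ t (M + 1)]
    simp only [recipCoeff]
    ring

end FirstPassage

section Narayana

lemma narayanaB_natCast_sub (t : ℚ) (x m : ℕ) :
    narayanaB t ((x : ℤ) - m) = if m ≤ x then offsetCoeff t 0 (x - m) else 0 := by
  split_ifs with h
  · rw [← Nat.cast_sub h, narayanaB, if_pos (Int.natCast_nonneg _), Int.toNat_natCast,
      offsetCoeff_eq_sum]
    simp [sq]
  · exact if_neg (by omega)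

lemma narayana_natCast_succ (t : ℚ) (s : ℕ) :
    narayana t ((s + 1 : ℕ) : ℤ) = firstPassage t 1 (s + 1) := by
  have hs : ((s : ℚ) + 1) ≠ 0 := by positivity
  rw [narayana, if_neg (by omega), if_neg (by omega), firstPassage, if_neg (Nat.succ_ne_zero s),
    offsetCoeff_eq_sum, sum_range_succ, Nat.choose_eq_zero_of_lt (by omega : s + 1 < s + 1 + 1),
    Int.toNat_natCast, Nat.add_sub_cancel, Nat.cast_zero, mul_zero, zero_mul, add_zero, mul_sum]
  push_cast
  refine sum_congr rfl fun k _ => ?_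
  have hk : ((k : ℚ) + 1) ≠ 0 := by positivity
  have hc :
      ((s : ℚ) + 1) * (s.choose k : ℚ) = ((s + 1).choose (k + 1) : ℚ) * ((k : ℚ) + 1) :=
    mod_cast Nat.add_one_mul_choose_eq s k
  field_simp
  linear_combination ((s + 1).choose k : ℚ) * t ^ k * hc

end Narayana

section Hankel

open Matrix

variable {R : Type*}

def hankel (h : ℕ → R) (n : ℕ) : Matrix (Fin n) (Fin n) R :=
  of fun i j => h (i + j)

lemma hankel_transpose (h : ℕ → R) (n : ℕ) : (hankel h n)ᵀ = hankel h n := by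
  ext i j
  simp [hankel, add_comm]

variable [CommRing R]

def upperToeplitz (c : ℕ → R) (n : ℕ) : Matrix (Fin n) (Fin n) R :=
  of fun i j => if (i : ℕ) ≤ j then c (j - i) else 0

lemma det_upperToeplitz (c : ℕ → R) (n : ℕ) : (upperToeplitz c n).det = c 0 ^ n := by
  have htri : (upperToeplitz c n).IsUpperTriangular := fun i j (hij : j < i) =>
    if_neg (not_le.mpr hij)
  rw [det_of_isUpperTriangular htri]
  simp [upperToeplitz]

lemma hankel_mul_upperToeplitz_apply (h c : ℕ → R) {n : ℕ} (i k : Fin n) :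
    (hankel h n * upperToeplitz c n) i k = ∑ j ∈ range (k + 1), h (i + j) * c (k - j) := by
  rw [mul_apply]
  simp only [hankel, upperToeplitz, of_apply, mul_ite, mul_zero]
  rw [Fin.sum_univ_eq_sum_range (fun j => if j ≤ (k : ℕ) then h (i + j) * c (k - j) else 0),
    ← sum_filter]
  congr 1
  ext j
  simp only [mem_filter, mem_range]
  omega

lemma upperToeplitz_transpose_mul_hankel_apply (c h : ℕ → R) {n : ℕ} (i k : Fin n) :
    ((upperToeplitz c n)ᵀ * hankel h n) i k = ∑ j ∈ range (i + 1), h (k + j) * c (i - j) := by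
  rw [← hankel_transpose h n, ← transpose_mul, transpose_apply, hankel_mul_upperToeplitz_apply]

lemma det_hankel_antidiagonal (s : ℕ) :
    (hankel (fun x => if x + 1 = s then 1 else 0) s : Matrix (Fin s) (Fin s) R).det =
      (-1) ^ s.choose 2 := by
  induction s with
  | zero => simp
  | succ s ih =>
    rw [det_succ_row_zero, sum_eq_single (Fin.last s)]
    · have hminor : (hankel (fun x => if x + 1 = s + 1 then (1 : R) else 0) (s + 1)).submatrix
          Fin.succ (Fin.last s).succAbove = hankel (fun x => if x + 1 = s then 1 else 0) s := by
        ext i k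
        simp only [hankel, submatrix_apply, of_apply, Fin.succAbove_last, Fin.val_succ,
          Fin.val_castSucc]
        exact if_congr (by omega) rfl rfl
      rw [hminor, ih, Nat.choose_succ_succ', Nat.choose_one_right, pow_add]
      simp [hankel]
    · intro k _ hk
      have hk : (k : ℕ) ≠ s := fun h => hk (Fin.ext h)
      simp [hankel, hk]
    · simp

lemma det_hankel_shift_eq_zero (a : ℕ → R) {m n : ℕ} (hn : 0 < n) (hnm : n ≤ m) :
    (hankel (fun x => if m ≤ x then a (x - m) else 0) n).det = 0 :=
  det_eq_zero_of_row_eq_zero ⟨0, hn⟩ fun j => if_neg (by simp; omega)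

section ConvolutionInverse

variable {a b : ℕ → R}
  (hab : ∀ N, ∑ u ∈ range (N + 1), a u * b (N - u) = if N = 0 then 1 else 0)
include hab

lemma sum_shifted_mul_eq_ite {i m : ℕ} (hi : i ≤ m) (k : ℕ) :
    ∑ j ∈ range (k + 1), (if m ≤ i + j then a (i + j - m) else 0) * b (k - j) =
      if i + k = m then 1 else 0 := by
  rcases lt_or_ge (i + k) m with hk | hk
  · rw [if_neg hk.ne]
    exact sum_eq_zero fun j hj => by
      rw [if_neg (by have := mem_range.mp hj; omega), zero_mul]
  · rw [show k + 1 = (m - i) + (i + k - m + 1) by omega, sum_range_add,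
      sum_eq_zero fun j hj => by rw [if_neg (by simp at hj; omega), zero_mul], zero_add]
    have hterm : ∀ u ∈ range (i + k - m + 1),
        (if m ≤ i + (m - i + u) then a (i + (m - i + u) - m) else 0) * b (k - (m - i + u)) =
          a u * b (i + k - m - u) := fun u _ => by
      rw [if_pos (by omega), show i + (m - i + u) - m = u by omega,
        show k - (m - i + u) = i + k - m - u by omega]
    rw [sum_congr rfl hterm, hab]
    exact if_congr (by omega) rfl rfl

lemma sum_shifted_mul_eq_neg (p k : ℕ) :
    ∑ j ∈ range (k + 1), a (p + 1 + j) * b (k - j) =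
      -∑ j ∈ range (p + 1), a (p - j) * b (k + j + 1) := by
  have h := hab (p + 1 + k)
  rw [if_neg (by omega), show p + 1 + k + 1 = p + 1 + (k + 1) by omega, sum_range_add,
    ← sum_range_reflect] at h
  have hterm : ∀ j ∈ range (p + 1),
      a (p + 1 - 1 - j) * b (p + 1 + k - (p + 1 - 1 - j)) = a (p - j) * b (k + j + 1) :=
    fun j hj => by
      have := mem_range.mp hj
      rw [show p + 1 - 1 - j = p - j by omega, show p + 1 + k - (p - j) = k + j + 1 by omega]
  simp only [show ∀ j, p + 1 + k - (p + 1 + j) = k - j from fun j => by omega,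
    sum_congr rfl hterm] at h
  exact eq_neg_of_add_eq_zero_right h

lemma det_hankel_shift (ha : a 0 = 1) (m q : ℕ) :
    (hankel (fun x => if m ≤ x then a (x - m) else 0) (m + 1 + q)).det =
      (-1) ^ (m + 1).choose 2 * (hankel (fun x => -b (x + m + 2)) q).det := by
  set M := (hankel (fun x => if m ≤ x then a (x - m) else 0) (m + 1 + q) *
    upperToeplitz b (m + 1 + q)).submatrix finSumFinEquiv finSumFinEquiv with hM
  have hb : b 0 = 1 := by simpa [ha] using hab 0
  have hM₁₁ : M.toBlocks₁₁ = hankel (fun x => if x + 1 = m + 1 then 1 else 0) (m + 1) := by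
    ext i k
    rw [toBlocks₁₁, of_apply, hM, submatrix_apply, finSumFinEquiv_apply_left,
      finSumFinEquiv_apply_left, hankel_mul_upperToeplitz_apply]
    simp only [Fin.val_castAdd, hankel, of_apply]
    rw [sum_shifted_mul_eq_ite hab (Nat.lt_succ_iff.mp i.isLt)]
    exact if_congr (by omega) rfl rfl
  have hM₁₂ : M.toBlocks₁₂ = 0 := by
    ext i k
    rw [toBlocks₁₂, of_apply, hM, submatrix_apply, finSumFinEquiv_apply_left,
      finSumFinEquiv_apply_right, hankel_mul_upperToeplitz_apply]
    simp only [Fin.val_castAdd, Fin.val_natAdd, Matrix.zero_apply]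
    rw [sum_shifted_mul_eq_ite hab (Nat.lt_succ_iff.mp i.isLt), if_neg (by omega)]
  have hM₂₂ :
      M.toBlocks₂₂ = (upperToeplitz a q)ᵀ * hankel (fun x => -b (x + m + 2)) q := by
    ext i k
    rw [toBlocks₂₂, of_apply, hM, submatrix_apply, finSumFinEquiv_apply_right,
      finSumFinEquiv_apply_right, hankel_mul_upperToeplitz_apply,
      upperToeplitz_transpose_mul_hankel_apply]
    simp only [Fin.val_natAdd]
    have hterm : ∀ j ∈ range (m + 1 + k + 1),
        (if m ≤ m + 1 + i + j then a (m + 1 + i + j - m) else 0) * b (m + 1 + k - j) =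
          a (i + 1 + j) * b (m + 1 + k - j) := fun j _ => by
      rw [if_pos (by omega), show m + 1 + i + j - m = i + 1 + j by omega]
    rw [sum_congr rfl hterm, sum_shifted_mul_eq_neg hab, ← sum_neg_distrib]
    refine sum_congr rfl fun j _ => ?_
    rw [show m + 1 + k + j + 1 = k + j + m + 2 by omega]
    ring
  calc _ = M.det := by
        rw [det_submatrix_equiv_self, det_mul, det_upperToeplitz, hb, one_pow, mul_one]
    _ = _ := by
        rw [← fromBlocks_toBlocks M, hM₁₂, det_fromBlocks_zero₁₂, hM₁₁, hM₂₂, det_mul,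
          det_transpose, det_upperToeplitz, ha, one_pow, one_mul, det_hankel_antidiagonal]

end ConvolutionInverse

end Hankel

theorem stmt5_general (t : ℚ) (m : ℕ) :
    (∀ n : ℕ, m + 1 ≤ n →
      Matrix.det (Matrix.of fun i j : Fin n =>
          narayanaB t (((i : ℕ) : ℤ) + ((j : ℕ) : ℤ) - (m : ℤ))) =
        (-1 : ℚ) ^ ((m + 1).choose 2) * (2 * t) ^ (n - m - 1) *
          Matrix.det (Matrix.of fun i j : Fin (n - m - 1) =>
            narayana t (((i : ℕ) : ℤ) + ((j : ℕ) : ℤ) + (m : ℤ) + 1))) ∧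
    (∀ n : ℕ, 1 ≤ n → n ≤ m →
      Matrix.det (Matrix.of fun i j : Fin n =>
          narayanaB t (((i : ℕ) : ℤ) + ((j : ℕ) : ℤ) - (m : ℤ))) = 0) := by
  have hB : ∀ n,
      (Matrix.of fun i j : Fin n => narayanaB t (((i : ℕ) : ℤ) + ((j : ℕ) : ℤ) - m)) =
        hankel (fun x => if m ≤ x then offsetCoeff t 0 (x - m) else 0) n := fun n => by
    ext i j
    rw [hankel, Matrix.of_apply, Matrix.of_apply, ← narayanaB_natCast_sub, Nat.cast_add]
  have hC : ∀ q, hankel (fun x => -recipCoeff t (x + m + 2)) q =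
      (2 * t) • Matrix.of fun i j : Fin q =>
        narayana t (((i : ℕ) : ℤ) + ((j : ℕ) : ℤ) + m + 1) :=
    fun q => by
      ext i j
      simp only [hankel, Matrix.of_apply, Matrix.smul_apply, smul_eq_mul, recipCoeff, neg_neg,
        ← narayana_natCast_succ, Nat.cast_add, Nat.cast_one]
  refine ⟨fun n hn => ?_, fun n hn hnm => ?_⟩
  · obtain ⟨q, rfl⟩ := Nat.exists_eq_add_of_le hn
    rw [hB, det_hankel_shift (sum_offsetCoeff_mul_recipCoeff t) (by simp [offsetCoeff_zero_right]),
      hC, Matrix.det_smul, Fintype.card_fin, show m + 1 + q - m - 1 = q by omega, mul_assoc]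
  · rw [hB]
    exact det_hankel_shift_eq_zero _ hn hnm

theorem stmt5 (t : ℚ) (m : ℕ) (hm : 1 ≤ m) :
    (∀ n : ℕ, m + 1 ≤ n →
      Matrix.det (Matrix.of fun i j : Fin n =>
          narayanaB t (((i : ℕ) : ℤ) + ((j : ℕ) : ℤ) - (m : ℤ))) =
        (-1 : ℚ) ^ ((m + 1).choose 2) * (2 * t) ^ (n - m - 1) *
          Matrix.det (Matrix.of fun i j : Fin (n - m - 1) =>
            narayana t (((i : ℕ) : ℤ) + ((j : ℕ) : ℤ) + (m : ℤ) + 1))) ∧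
    (∀ n : ℕ, 1 ≤ n → n ≤ m →
      Matrix.det (Matrix.of fun i j : Fin n =>
          narayanaB t (((i : ℕ) : ℤ) + ((j : ℕ) : ℤ) - (m : ℤ))) = 0) :=
  stmt5_general t m
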